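/- Let d ∈ ℕ, let ν₁,…,ν_d ∈ ℕ, and let ω^{(i)} ∈ ℝ^{ν_i} be non-resonant for each i. Let 2 ≤ p < ∞, T ∈ (0,1], δ ≥ 0, s ≥ 0, C ≥ 1, and K > 0. Suppose that for every c : ℤ^{ν₁}×…×ℤ^{ν_d} → ℂ supported in {n : |n| ≤ C} one has limsup_{L→∞} (1/(2L)^d) ∫_0^T ∫_{[−L,L]^d} | ∑_n c_n e^{i(⟨n⟩_ω · x − t|⟨n⟩_ω|²)} |^p dx dt ≤ (K T^δ C^s)^p ( ∑_n |c_n|² )^{p/2}. Then for every a ∈ ℤ^{ν₁}×…×ℤ^{ν_d} and every c supported in {n : |n − a| ≤ C} the same estimate holds with the same constant K. (Galilean invariance of quasi-periodic Strichartz estimates, Proposition 5.3.) -/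

import Mathlib

open MeasureTheory Filter

/-- The `i`-th component `⟨n_i⟩_{ω^{(i)}} = n_i · ω^{(i)}` of the frequency vector of a
multi-index `n ∈ ℤ^{ν₁} × … × ℤ^{ν_d}`. -/
noncomputable def freqVec {d : ℕ} {ν : Fin d → ℕ} (ω : ∀ i, Fin (ν i) → ℝ)
    (n : ∀ i, Fin (ν i) → ℤ) (i : Fin d) : ℝ :=
  ∑ j, (n i j : ℝ) * ω i j

/-- The height `|n|` (Euclidean norm of the full integer vector) of a multi-index. -/
noncomputable def heightVec {d : ℕ} {ν : Fin d → ℕ} (n : ∀ i, Fin (ν i) → ℤ) : ℝ :=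
  Real.sqrt (∑ i, ∑ j, ((n i j : ℝ)) ^ 2)

/-- The mean `L^p_{t,x}([0,T] × ℝ^d)` norm (raised to the power `p`) of the free
Schrödinger evolution of the quasi-periodic trigonometric polynomial with
coefficients `c`, expressed as a limsup of averages. -/
noncomputable def strichartzAvg (d : ℕ) (ν : Fin d → ℕ) (ω : ∀ i, Fin (ν i) → ℝ)
    (p T : ℝ) (c : (∀ i, Fin (ν i) → ℤ) → ℂ) : ℝ :=
  limsup (fun L : ℝ =>
    (1 / (2 * L) ^ d) * ∫ t in Set.Icc (0 : ℝ) T,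
      ∫ x in (Set.univ.pi fun _ : Fin d => Set.Icc (-L) L),
        ‖∑' n : ∀ i, Fin (ν i) → ℤ, c n *
          Complex.exp (Complex.I *
            ((∑ i, freqVec ω n i * x i - t * ∑ i, freqVec ω n i ^ 2 : ℝ) : ℂ))‖ ^ p)
    atTop

/-! A shift of the frequencies is a Galilean transformation: the phase identity
`⟨ξ + η, x⟩ - t |ξ + η|² = (⟨ξ, x - 2tη⟩ - t |ξ|²) + (⟨η, x⟩ - t |η|²)` shows that replacing the
coefficients `c` by `c (· + a)` multiplies the evolution by a unimodular factor and translates it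
in space by `2t⟨a⟩_ω`. For `t ∈ [0, T]` this translation has size at most `M = 2T|⟨a⟩_ω|`, so the
average over `[-L, L]^d` of the evolution of `c` is at most `((L + M) / L)^d` times the average
over `[-(L + M), L + M]^d` of the evolution of `c (· + a)`. The factor tends to `1` and the averages
of a trigonometric polynomial are bounded, so the limsups compare. The shift preserves the `ℓ²`
norm and maps the ball `{|n - a| ≤ C}` onto `{|n| ≤ C}`, where the hypothesis applies. -/

open Topology

noncomputable def schrodingerPhase {d : ℕ} (ξ x : Fin d → ℝ) (t : ℝ) : ℝ :=
  ∑ i, ξ i * x i - t * ∑ i, ξ i ^ 2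

noncomputable def schrodingerWave {ι : Type*} {d : ℕ} (ξ : ι → Fin d → ℝ) (c : ι → ℂ)
    (t : ℝ) (x : Fin d → ℝ) : ℂ :=
  ∑' n, c n * Complex.exp (Complex.I * schrodingerPhase (ξ n) x t)

def cube (d : ℕ) (L : ℝ) : Set (Fin d → ℝ) :=
  Set.univ.pi fun _ => Set.Icc (-L) L

noncomputable def cubeAverage {d : ℕ} (p T : ℝ) (u : ℝ → (Fin d → ℝ) → ℂ) (L : ℝ) : ℝ :=
  1 / (2 * L) ^ d * ∫ t in Set.Icc 0 T, ∫ x in cube d L, ‖u t x‖ ^ p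

theorem strichartzAvg_eq_limsup_cubeAverage {d : ℕ} {ν : Fin d → ℕ} (ω : ∀ i, Fin (ν i) → ℝ)
    (p T : ℝ) (c : (∀ i, Fin (ν i) → ℤ) → ℂ) :
    strichartzAvg d ν ω p T c = limsup (cubeAverage p T (schrodingerWave (freqVec ω) c)) atTop :=
  rfl

theorem freqVec_add {d : ℕ} {ν : Fin d → ℕ} (ω : ∀ i, Fin (ν i) → ℝ)
    (m n : ∀ i, Fin (ν i) → ℤ) : freqVec ω (m + n) = freqVec ω m + freqVec ω n := by
  ext i
  simp only [freqVec, Pi.add_apply, Int.cast_add, add_mul, Finset.sum_add_distrib]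

theorem schrodingerPhase_add {d : ℕ} (ξ η x : Fin d → ℝ) (t : ℝ) :
    schrodingerPhase (ξ + η) x t =
      schrodingerPhase ξ (x - (2 * t) • η) t + schrodingerPhase η x t := by
  simp only [schrodingerPhase, Pi.add_apply, Pi.sub_apply, Pi.smul_apply, smul_eq_mul,
    Finset.mul_sum, ← Finset.sum_sub_distrib, ← Finset.sum_add_distrib]
  exact Finset.sum_congr rfl fun i _ => by ring

theorem norm_cexp_I_mul_ofReal (r : ℝ) : ‖Complex.exp (Complex.I * r)‖ = 1 := by
  rw [mul_comm, Complex.norm_exp_ofReal_mul_I]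

theorem norm_schrodingerWave_comp_add {G : Type*} [AddGroup G] {d : ℕ}
    (ξ : G → Fin d → ℝ) (a : G) (hξ : ∀ m, ξ (m + a) = ξ m + ξ a) (c : G → ℂ)
    (t : ℝ) (x : Fin d → ℝ) :
    ‖schrodingerWave ξ c t x‖ =
      ‖schrodingerWave ξ (fun m => c (m + a)) t (x - (2 * t) • ξ a)‖ := by
  have hshift : schrodingerWave ξ c t x =
      schrodingerWave ξ (fun m => c (m + a)) t (x - (2 * t) • ξ a) *
        Complex.exp (Complex.I * schrodingerPhase (ξ a) x t) := by
    rw [schrodingerWave, ← (Equiv.addRight a).tsum_eq, schrodingerWave, ← tsum_mul_right]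
    refine tsum_congr fun m => ?_
    simp only [Equiv.coe_addRight, hξ, schrodingerPhase_add, Complex.ofReal_add, mul_add,
      Complex.exp_add]
    ring
  rw [hshift, norm_mul, norm_cexp_I_mul_ofReal, mul_one]

section FiniteSupport

variable {ι : Type*} {d : ℕ} (ξ : ι → Fin d → ℝ) {c : ι → ℂ} {s : Finset ι}

theorem schrodingerWave_eq_sum (hc : ∀ n ∉ s, c n = 0) (t : ℝ) (x : Fin d → ℝ) :
    schrodingerWave ξ c t x =
      ∑ n ∈ s, c n * Complex.exp (Complex.I * schrodingerPhase (ξ n) x t) :=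
  tsum_eq_sum fun n hn => by rw [hc n hn, zero_mul]

theorem continuous_schrodingerWave (hc : ∀ n ∉ s, c n = 0) :
    Continuous (Function.uncurry (schrodingerWave ξ c)) := by
  have hphase : ∀ n, Continuous fun q : ℝ × (Fin d → ℝ) => schrodingerPhase (ξ n) q.2 q.1 :=
    fun n => by unfold schrodingerPhase; fun_prop
  simp only [Function.uncurry_def, schrodingerWave_eq_sum ξ hc]
  fun_prop

theorem norm_schrodingerWave_le (hc : ∀ n ∉ s, c n = 0) (t : ℝ) (x : Fin d → ℝ) :
    ‖schrodingerWave ξ c t x‖ ≤ ∑ n ∈ s, ‖c n‖ := by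
  rw [schrodingerWave_eq_sum ξ hc]
  refine (norm_sum_le _ _).trans_eq (Finset.sum_congr rfl fun n _ => ?_)
  rw [norm_mul, norm_cexp_I_mul_ofReal, mul_one]

end FiniteSupport

theorem mem_cube {d : ℕ} {L : ℝ} {x : Fin d → ℝ} : x ∈ cube d L ↔ ∀ i, |x i| ≤ L := by
  simp only [cube, Set.mem_univ_pi, Set.mem_Icc, abs_le]

theorem isCompact_cube (d : ℕ) (L : ℝ) : IsCompact (cube d L) :=
  isCompact_univ_pi fun _ => isCompact_Icc

theorem measureReal_cube {d : ℕ} {L : ℝ} (hL : 0 ≤ L) :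
    volume.real (cube d L) = (2 * L) ^ d := by
  rw [measureReal_def, cube, volume_pi_pi]
  simp only [Real.volume_Icc, Finset.prod_const, Finset.card_univ, Fintype.card_fin]
  rw [show L - -L = 2 * L by ring, ← ENNReal.ofReal_pow (by linarith),
    ENNReal.toReal_ofReal (by positivity)]

theorem setIntegral_comp_sub_le {G : Type*} [AddGroup G] [MeasurableSpace G] [MeasurableAdd G]
    (μ : Measure G) [μ.IsAddRightInvariant] {h : G → ℝ} (hh : 0 ≤ h) {s t : Set G}
    (ht : IntegrableOn h t μ) (v : G) (hst : ∀ x ∈ s, x - v ∈ t) :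
    ∫ x in s, h (x - v) ∂μ ≤ ∫ y in t, h y ∂μ := by
  have hmp := measurePreserving_sub_right μ v
  have hemb := measurableEmbedding_subRight (G := G) v
  refine le_of_le_of_eq ?_ (hmp.setIntegral_preimage_emb hemb h t)
  exact setIntegral_mono_set ((hmp.integrableOn_comp_preimage hemb).2 ht)
    (Eventually.of_forall fun x => hh (x - v)) (Eventually.of_forall hst)

theorem integral_Icc_cube_comp_sub_le {d : ℕ} {F : ℝ → (Fin d → ℝ) → ℝ}
    (hF : Continuous (Function.uncurry F)) (hF0 : ∀ t y, 0 ≤ F t y) {T M : ℝ}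
    {v : ℝ → Fin d → ℝ} (hv : ∀ t ∈ Set.Icc 0 T, ‖v t‖ ≤ M) (L : ℝ) :
    ∫ t in Set.Icc 0 T, ∫ x in cube d L, F t (x - v t) ≤
      ∫ t in Set.Icc 0 T, ∫ y in cube d (L + M), F t y := by
  have hint : IntegrableOn (fun t => ∫ y in cube d (L + M), F t y) (Set.Icc 0 T) :=
    (continuous_parametric_integral_of_continuous hF (isCompact_cube d _)).integrableOn_Icc
  refine integral_mono_of_nonneg (Eventually.of_forall fun t => integral_nonneg fun x => hF0 t _)
    hint ((ae_restrict_iff' measurableSet_Icc).2 (Eventually.of_forall fun t ht => ?_))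
  have hFt : IntegrableOn (F t) (cube d (L + M)) :=
    (hF.uncurry_left t).continuousOn.integrableOn_compact (isCompact_cube d _)
  refine setIntegral_comp_sub_le volume (hF0 t) hFt (v t) fun x hx => mem_cube.2 fun i => ?_
  calc |(x - v t) i| ≤ |x i| + |v t i| := abs_sub _ _
    _ ≤ L + M := add_le_add (mem_cube.1 hx i) ((norm_le_pi_norm (v t) i).trans (hv t ht))

theorem limsup_le_limsup_of_le_mul_comp_add {f g q : ℝ → ℝ} {M D : ℝ}
    (hf : ∀ᶠ L in atTop, 0 ≤ f L) (hg : ∀ᶠ L in atTop, 0 ≤ g L ∧ g L ≤ D)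
    (hq : Tendsto q atTop (𝓝 1)) (hfg : ∀ᶠ L in atTop, f L ≤ q L * g (L + M)) :
    limsup f atTop ≤ limsup g atTop := by
  set g' : ℝ → ℝ := fun L => g (L + M)
  have hg' : ∀ᶠ L in atTop, 0 ≤ g' L ∧ g' L ≤ D :=
    (tendsto_atTop_add_const_right _ M tendsto_id).eventually hg
  have hq0 : ∃ᶠ L in atTop, 0 ≤ q L :=
    ((hq.eventually (eventually_gt_nhds one_pos)).mono fun _ h => h.le).frequently
  have hg'0 : 0 ≤ᶠ[atTop] g' := hg'.mono fun _ h => h.1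
  have hg'D : IsBoundedUnder (· ≤ ·) atTop g' :=
    isBoundedUnder_of_eventually_le (hg'.mono fun _ h => h.2)
  calc limsup f atTop ≤ limsup (q * g') atTop :=
        limsup_le_limsup hfg (isCoboundedUnder_le_of_eventually_le _ hf)
          (isBoundedUnder_le_mul_of_nonneg hq0 hq.isBoundedUnder_le hg'0 hg'D)
    _ ≤ limsup q atTop * limsup g' atTop := limsup_mul_le hq0 hq.isBoundedUnder_le hg'0 hg'D
    _ = limsup g atTop := by
      rw [hq.limsup_eq, one_mul]
      exact (limsup_comp g (· + M) atTop).trans (by rw [map_add_atTop_eq])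

section CubeAverage

variable {d : ℕ} {p T : ℝ}

theorem cubeAverage_nonneg (u : ℝ → (Fin d → ℝ) → ℂ) {L : ℝ} (hL : 0 ≤ L) :
    0 ≤ cubeAverage p T u L :=
  mul_nonneg (by positivity) (integral_nonneg fun _ => integral_nonneg fun _ => by positivity)

theorem cubeAverage_le {u : ℝ → (Fin d → ℝ) → ℂ} {B L : ℝ} (hp : 0 ≤ p) (hT : 0 ≤ T)
    (hL : 0 < L) (hu : ∀ t x, ‖u t x‖ ≤ B) : cubeAverage p T u L ≤ T * B ^ p := by
  have hinner : ∀ t, ∫ x in cube d L, ‖u t x‖ ^ p ≤ (2 * L) ^ d * B ^ p := fun t => by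
    have h := norm_setIntegral_le_of_norm_le_const
      ((isCompact_cube d L).measure_lt_top (μ := volume))
      fun x _ => (Real.norm_of_nonneg (by positivity)).trans_le
        (Real.rpow_le_rpow (norm_nonneg _) (hu t x) hp)
    rwa [Real.norm_of_nonneg (integral_nonneg fun _ => by positivity), measureReal_cube hL.le,
      mul_comm] at h
  calc cubeAverage p T u L ≤ 1 / (2 * L) ^ d * ∫ _ in Set.Icc 0 T, (2 * L) ^ d * B ^ p := by
        refine mul_le_mul_of_nonneg_left ?_ (by positivity)
        exact integral_mono_of_nonneg (Eventually.of_forall fun _ => integral_nonneg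
          fun _ => by positivity) (integrable_const _) (Eventually.of_forall hinner)
    _ = T * B ^ p := by
        rw [setIntegral_const, Real.volume_real_Icc_of_le hT, smul_eq_mul]
        field_simp
        ring

theorem limsup_cubeAverage_le_of_norm_eq_comp_sub {u w : ℝ → (Fin d → ℝ) → ℂ}
    {v : ℝ → Fin d → ℝ} {B M : ℝ} (hp : 0 ≤ p) (hT : 0 ≤ T)
    (hw : Continuous (Function.uncurry w)) (hwB : ∀ t x, ‖w t x‖ ≤ B)
    (huw : ∀ t x, ‖u t x‖ = ‖w t (x - v t)‖) (hv : ∀ t ∈ Set.Icc 0 T, ‖v t‖ ≤ M) :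
    limsup (cubeAverage p T u) atTop ≤ limsup (cubeAverage p T w) atTop := by
  have hM : 0 ≤ M := (norm_nonneg _).trans (hv 0 ⟨le_rfl, hT⟩)
  have hq : Tendsto (fun L : ℝ => (1 + M / L) ^ d) atTop (𝓝 1) := by
    simpa using (((tendsto_const_nhds (x := M)).div_atTop tendsto_id).const_add 1).pow d
  refine limsup_le_limsup_of_le_mul_comp_add (M := M) (D := T * B ^ p)
    ((eventually_ge_atTop 0).mono fun L hL => cubeAverage_nonneg u hL)
    ((eventually_gt_atTop 0).mono fun L hL =>
      ⟨cubeAverage_nonneg w hL.le, cubeAverage_le hp hT hL hwB⟩) hq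
    ((eventually_gt_atTop 0).mono fun L hL => ?_)
  have hshift := integral_Icc_cube_comp_sub_le (F := fun t y => ‖w t y‖ ^ p)
    (hw.norm.rpow_const fun _ => Or.inr hp) (fun _ _ => by positivity) hv L
  simp only [← huw] at hshift
  calc cubeAverage p T u L ≤ 1 / (2 * L) ^ d *
        ∫ t in Set.Icc 0 T, ∫ y in cube d (L + M), ‖w t y‖ ^ p :=
        mul_le_mul_of_nonneg_left hshift (by positivity)
    _ = (1 + M / L) ^ d * cubeAverage p T w (L + M) := by
        have hLM : 0 < L + M := by linarith
        rw [cubeAverage, ← mul_assoc, one_add_div hL.ne', div_pow, mul_pow, mul_pow]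
        congr 1
        field_simp

end CubeAverage

section Height

variable {d : ℕ} {ν : Fin d → ℕ}

theorem abs_le_heightVec (n : ∀ i, Fin (ν i) → ℤ) (i : Fin d) (j : Fin (ν i)) :
    |(n i j : ℝ)| ≤ heightVec n := by
  refine Real.abs_le_sqrt ?_
  calc (n i j : ℝ) ^ 2 ≤ ∑ j', (n i j' : ℝ) ^ 2 :=
        Finset.single_le_sum (f := fun j' => (n i j' : ℝ) ^ 2) (fun _ _ => sq_nonneg _)
          (Finset.mem_univ j)
    _ ≤ ∑ i', ∑ j', (n i' j' : ℝ) ^ 2 :=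
        Finset.single_le_sum (f := fun i' => ∑ j', (n i' j' : ℝ) ^ 2)
          (fun _ _ => Finset.sum_nonneg fun _ _ => sq_nonneg _) (Finset.mem_univ i)

theorem norm_le_heightVec (n : ∀ i, Fin (ν i) → ℤ) : ‖n‖ ≤ heightVec n := by
  have h0 : 0 ≤ heightVec n := Real.sqrt_nonneg _
  refine (pi_norm_le_iff_of_nonneg h0).2 fun i => (pi_norm_le_iff_of_nonneg h0).2 fun j => ?_
  rw [Int.norm_eq_abs]
  exact abs_le_heightVec n i j

theorem finite_setOf_heightVec_le (C : ℝ) :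
    {n : ∀ i, Fin (ν i) → ℤ | heightVec n ≤ C}.Finite :=
  (isCompact_closedBall (0 : ∀ i, Fin (ν i) → ℤ) C).finite_of_discrete.subset fun n hn =>
    mem_closedBall_zero_iff.2 ((norm_le_heightVec n).trans hn)

end Height

theorem strichartzAvg_le_strichartzAvg_comp_add {d : ℕ} {ν : Fin d → ℕ}
    (ω : ∀ i, Fin (ν i) → ℝ) {p T : ℝ} (hp : 0 ≤ p) (hT : 0 ≤ T) (a : ∀ i, Fin (ν i) → ℤ)
    {c : (∀ i, Fin (ν i) → ℤ) → ℂ} {s : Finset (∀ i, Fin (ν i) → ℤ)}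
    (hc : ∀ n ∉ s, c (n + a) = 0) :
    strichartzAvg d ν ω p T c ≤ strichartzAvg d ν ω p T (fun n => c (n + a)) := by
  rw [strichartzAvg_eq_limsup_cubeAverage, strichartzAvg_eq_limsup_cubeAverage]
  refine limsup_cubeAverage_le_of_norm_eq_comp_sub (v := fun t => (2 * t) • freqVec ω a)
    (M := 2 * T * ‖freqVec ω a‖) hp hT (continuous_schrodingerWave _ hc)
    (norm_schrodingerWave_le _ hc)
    (norm_schrodingerWave_comp_add _ a (fun m => freqVec_add ω m a) c) fun t ht => ?_
  rw [norm_smul, Real.norm_of_nonneg (by linarith [ht.1])]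
  exact mul_le_mul_of_nonneg_right (by linarith [ht.2]) (norm_nonneg _)

theorem galilean_invariance_strichartz_general
    (d : ℕ) (ν : Fin d → ℕ)
    (ω : ∀ i, Fin (ν i) → ℝ)
    (p : ℝ) (hp : 2 ≤ p) (T : ℝ) (hT : T ∈ Set.Ioc (0 : ℝ) 1)
    (δ : ℝ) (s : ℝ) (C : ℝ)
    (K : ℝ)
    (hyp : ∀ c : (∀ i, Fin (ν i) → ℤ) → ℂ,
      (∀ n, c n ≠ 0 → heightVec n ≤ C) →
      strichartzAvg d ν ω p T c
        ≤ (K * T ^ δ * C ^ s) ^ p * (∑' n, ‖c n‖ ^ 2) ^ (p / 2)) :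
    ∀ a : ∀ i, Fin (ν i) → ℤ,
      ∀ c : (∀ i, Fin (ν i) → ℤ) → ℂ,
        (∀ n, c n ≠ 0 → heightVec (n - a) ≤ C) →
        strichartzAvg d ν ω p T c
          ≤ (K * T ^ δ * C ^ s) ^ p * (∑' n, ‖c n‖ ^ 2) ^ (p / 2) := by
  intro a c hc
  have hshift : ∀ n, c (n + a) ≠ 0 → heightVec n ≤ C := fun n hn => by
    simpa using hc (n + a) hn
  have hfin := finite_setOf_heightVec_le (ν := ν) C
  calc strichartzAvg d ν ω p T c ≤ strichartzAvg d ν ω p T (fun n => c (n + a)) :=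
        strichartzAvg_le_strichartzAvg_comp_add ω (by linarith) hT.1.le a
          (s := hfin.toFinset) fun n hn =>
            not_not.1 fun h => hn (hfin.mem_toFinset.2 (hshift n h))
    _ ≤ (K * T ^ δ * C ^ s) ^ p * (∑' n, ‖c (n + a)‖ ^ 2) ^ (p / 2) := hyp _ hshift
    _ = (K * T ^ δ * C ^ s) ^ p * (∑' n, ‖c n‖ ^ 2) ^ (p / 2) := by
        congr 2
        exact (Equiv.addRight a).tsum_eq fun n => ‖c n‖ ^ 2

/-- Galilean invariance of quasi-periodic Strichartz estimates (Proposition 5.3):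
if the Strichartz estimate holds for data of height at most `C`, then it holds with
the same constant for data whose height index lies in any ball `{|n − a| ≤ C}`. -/
theorem galilean_invariance_strichartz
    (d : ℕ) (hd : 1 ≤ d) (ν : Fin d → ℕ) (hν : ∀ i, 1 ≤ ν i)
    (ω : ∀ i, Fin (ν i) → ℝ)
    (hpos : ∀ i j, 0 < ω i j)
    (hnr : ∀ i, ∀ m : Fin (ν i) → ℤ, (∑ j, (m j : ℝ) * ω i j) = 0 → m = 0)
    (p : ℝ) (hp : 2 ≤ p) (T : ℝ) (hT : T ∈ Set.Ioc (0 : ℝ) 1)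
    (δ : ℝ) (hδ : 0 ≤ δ) (s : ℝ) (hs : 0 ≤ s) (C : ℝ) (hC : 1 ≤ C)
    (K : ℝ) (hK : 0 < K)
    (hyp : ∀ c : (∀ i, Fin (ν i) → ℤ) → ℂ,
      (∀ n, c n ≠ 0 → heightVec n ≤ C) →
      strichartzAvg d ν ω p T c
        ≤ (K * T ^ δ * C ^ s) ^ p * (∑' n, ‖c n‖ ^ 2) ^ (p / 2)) :
    ∀ a : ∀ i, Fin (ν i) → ℤ,
      ∀ c : (∀ i, Fin (ν i) → ℤ) → ℂ,
        (∀ n, c n ≠ 0 → heightVec (n - a) ≤ C) →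
        strichartzAvg d ν ω p T c
          ≤ (K * T ^ δ * C ^ s) ^ p * (∑' n, ‖c n‖ ^ 2) ^ (p / 2) :=
  galilean_invariance_strichartz_general d ν ω p hp T hT δ s C K hyp
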